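/- For every k ≥ 1, the only permutation avoiding 132 and 213 and containing the decreasing pattern (k, k−1, …, 1) exactly once is the decreasing permutation of length k itself; i.e., |Sₙ(132,213;(k,…,2,1))| = 1 if n = k and 0 otherwise. -/
import Mathlib


/-- An occurrence of the pattern `τ` (of length `k`) in the permutation `π` (of length `n`)
is a strictly increasing map of positions along which `π` is order-isomorphic to `τ`. -/
def IsOcc {k n : ℕ} (τ : Fin k → Fin k) (π : Fin n → Fin n) (f : Fin k → Fin n) : Prop :=
  StrictMono f ∧ ∀ i j : Fin k, τ i < τ j ↔ π (f i) < π (f j)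

/-- `π` avoids the pattern `τ`. -/
def Avoids {k n : ℕ} (τ : Fin k → Fin k) (π : Fin n → Fin n) : Prop :=
  ¬ ∃ f, IsOcc τ π f

/-- `π` contains exactly one occurrence of the pattern `τ`. -/
def ContainsOnce {k n : ℕ} (τ : Fin k → Fin k) (π : Fin n → Fin n) : Prop :=
  ∃! f, IsOcc τ π f

def p123 : Fin 3 → Fin 3 := ![0, 1, 2]
def p132 : Fin 3 → Fin 3 := ![0, 2, 1]
def p213 : Fin 3 → Fin 3 := ![1, 0, 2]
def p231 : Fin 3 → Fin 3 := ![1, 2, 0]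
def p312 : Fin 3 → Fin 3 := ![2, 0, 1]
def p321 : Fin 3 → Fin 3 := ![2, 1, 0]

section aux

variable {n : ℕ} {π : Fin n → Fin n}

private lemma strictMono_vec3 {a b c : Fin n} (hab : a < b) (hbc : b < c) :
    StrictMono ![a, b, c] := by
  intro i j hij
  fin_cases i <;> fin_cases j <;>
    simp_all <;>
    first
      | exact hab
      | exact hbc
      | exact hab.trans hbc
      | exact absurd hij (by omega)

private lemma occ132 {a b c : Fin n} (hab : a < b) (hbc : b < c)
    (h1 : π a < π c) (h2 : π c < π b) : ∃ f, IsOcc p132 π f := by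
  refine ⟨![a, b, c], strictMono_vec3 hab hbc, ?_⟩
  intro i j
  fin_cases i <;> fin_cases j <;>
    simp [p132, IsOcc] <;>
    first
      | exact h1.trans h2
      | exact h1
      | exact h2
      | exact (h1.trans h2).le
      | exact h1.le
      | exact h2.le
      | exact (h2.trans h1).le
      | exact (h2.trans' h1).le
      | exact (h1.trans h2).asymm
      | exact h1.asymm
      | exact h2.asymm
      | exact h2.trans' h1

private lemma occ213 {a b c : Fin n} (hab : a < b) (hbc : b < c)
    (h1 : π b < π a) (h2 : π a < π c) : ∃ f, IsOcc p213 π f := by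
  refine ⟨![a, b, c], strictMono_vec3 hab hbc, ?_⟩
  intro i j
  fin_cases i <;> fin_cases j <;>
    simp [p213, IsOcc] <;>
    first
      | exact h1.trans h2
      | exact h1
      | exact h2
      | exact (h1.trans h2).le
      | exact h1.le
      | exact h2.le
      | exact (h2.trans h1).le
      | exact (h2.trans' h1).le
      | exact (h1.trans h2).asymm
      | exact h1.asymm
      | exact h2.asymm
      | exact h2.trans' h1

/-- Given an occurrence of the decreasing pattern and one further position, we can produce a
second (different) occurrence, provided `π` avoids 132 and 213. -/
private lemma second_occ {k : ℕ} (hk : 1 ≤ k) (hπ : Function.Injective π)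
    (h132 : Avoids p132 π) (h213 : Avoids p213 π)
    (x : Fin k → Fin n) (hx : IsOcc (Fin.rev : Fin k → Fin k) π x)
    (p : Fin n) (hp : ∀ j, x j ≠ p) :
    ∃ g, IsOcc (Fin.rev : Fin k → Fin k) π g ∧ g ≠ x := by
  obtain ⟨hxm, hxo⟩ := hx
  have hanti : ∀ {i j : Fin k}, i < j → π (x j) < π (x i) := by
    intro i j hij
    exact (hxo j i).mp (Fin.rev_lt_rev.mpr hij)
  -- a "bad" index is one that must be dropped
  have badUnique : ∀ j1 j2 : Fin k,
      ((x j1 < p ∧ π (x j1) < π p) ∨ (p < x j1 ∧ π p < π (x j1))) →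
      ((x j2 < p ∧ π (x j2) < π p) ∨ (p < x j2 ∧ π p < π (x j2))) → j1 = j2 := by
    intro j1 j2 hb1 hb2
    by_contra hne
    rcases lt_trichotomy j1 j2 with h12 | h12 | h12
    · rcases hb1 with ⟨hx1, hv1⟩ | ⟨hx1, hv1⟩ <;> rcases hb2 with ⟨hx2, hv2⟩ | ⟨hx2, hv2⟩
      · exact h213 (occ213 (hxm h12) hx2 (hanti h12) hv1)
      · exact absurd (hv1.trans hv2) (hanti h12).asymm
      · exact absurd (hx2.trans hx1) (hxm h12).asymm
      · exact h132 (occ132 hx1 (hxm h12) hv2 (hanti h12))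
    · exact hne h12
    · rcases hb1 with ⟨hx1, hv1⟩ | ⟨hx1, hv1⟩ <;> rcases hb2 with ⟨hx2, hv2⟩ | ⟨hx2, hv2⟩
      · exact h213 (occ213 (hxm h12) hx1 (hanti h12) hv2)
      · exact absurd (hx1.trans hx2) (hxm h12).asymm
      · exact absurd (hv2.trans hv1) (hanti h12).asymm
      · exact h132 (occ132 hx2 (hxm h12) hv1 (hanti h12))
  classical
  set Bad : Fin k → Prop :=
    fun j => (x j < p ∧ π (x j) < π p) ∨ (p < x j ∧ π p < π (x j)) with hBad
  set r : Fin k := if h : ∃ j, Bad j then h.choose else ⟨0, hk⟩ with hr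
  have hgood : ∀ j, j ≠ r → ¬ Bad j := by
    intro j hj hbj
    apply hj
    have hex : ∃ j, Bad j := ⟨j, hbj⟩
    rw [hr, dif_pos hex]
    exact badUnique j _ hbj hex.choose_spec
  have key : ∀ j, j ≠ r → (x j < p ↔ π p < π (x j)) := by
    intro j hj
    have hb := hgood j hj
    have hne1 : x j ≠ p := hp j
    have hne2 : π (x j) ≠ π p := fun h => hne1 (hπ h)
    constructor
    · intro h
      have hnb : ¬ π (x j) < π p := fun hv => hb (Or.inl ⟨h, hv⟩)
      exact lt_of_le_of_ne (not_lt.mp hnb) hne2.symm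
    · intro h
      rcases lt_or_gt_of_ne hne1 with h' | h'
      · exact h'
      · exact (hb (Or.inr ⟨h', h⟩)).elim
  -- the new support set
  set s : Finset (Fin n) := insert p ((Finset.univ.image x).erase (x r)) with hs
  have hpim : p ∉ Finset.univ.image x := by
    simp only [Finset.mem_image, Finset.mem_univ, true_and]
    rintro ⟨j, hj⟩
    exact hp j hj
  have hscard : s.card = k := by
    rw [hs, Finset.card_insert_of_notMem (fun h => hpim (Finset.mem_of_mem_erase h)),
      Finset.card_erase_of_mem (Finset.mem_image_of_mem x (Finset.mem_univ r)),
      Finset.card_image_of_injective _ hxm.injective, Finset.card_univ, Fintype.card_fin]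
    omega
  have hmem : ∀ a ∈ s, a = p ∨ ∃ j, j ≠ r ∧ a = x j := by
    intro a ha
    rw [hs, Finset.mem_insert] at ha
    rcases ha with ha | ha
    · exact Or.inl ha
    · right
      rw [Finset.mem_erase] at ha
      obtain ⟨hane, haim⟩ := ha
      simp only [Finset.mem_image, Finset.mem_univ, true_and] at haim
      obtain ⟨j, hj⟩ := haim
      exact ⟨j, fun h => hane (by rw [← hj, h]), hj.symm⟩
  have hantis : ∀ a ∈ s, ∀ b ∈ s, a < b → π b < π a := by
    intro a ha b hb hab
    rcases hmem a ha with ha' | ⟨j1, hj1, ha'⟩ <;> rcases hmem b hb with hb' | ⟨j2, hj2, hb'⟩ <;>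
      rw [ha', hb'] at hab ⊢
    · exact absurd hab (lt_irrefl _)
    · -- p < x j2
      have h1 : ¬ x j2 < p := not_lt.mpr hab.le
      have h2 : ¬ π p < π (x j2) := fun h => h1 ((key j2 hj2).mpr h)
      have hne2 : π (x j2) ≠ π p := fun h => hp j2 (hπ h)
      exact lt_of_le_of_ne (not_lt.mp h2) hne2
    · exact (key j1 hj1).mp hab
    · exact hanti (hxm.lt_iff_lt.mp hab)
  have hps : p ∈ s := Finset.mem_insert_self _ _
  -- the new occurrence
  set g : Fin k → Fin n := fun j => ((s.orderIsoOfFin hscard) j : Fin n) with hg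
  have hgm : StrictMono g := fun a b h =>
    Subtype.coe_lt_coe.mpr ((s.orderIsoOfFin hscard).strictMono h)
  have hgs : ∀ j, g j ∈ s := fun j => (s.orderIsoOfFin hscard j).2
  refine ⟨g, ⟨hgm, ?_⟩, ?_⟩
  · intro i j
    rw [Fin.rev_lt_rev]
    constructor
    · intro h
      exact hantis _ (hgs j) _ (hgs i) (hgm h)
    · intro h
      rcases lt_trichotomy j i with h' | h' | h'
      · exact h'
      · exact absurd h (by rw [h']; exact lt_irrefl _)
      · exact absurd h (hantis _ (hgs i) _ (hgs j) (hgm h')).asymm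
  · intro hgx
    obtain ⟨j, hj⟩ : ∃ j, g j = p := ⟨(s.orderIsoOfFin hscard).symm ⟨p, hps⟩, by
      show ((s.orderIsoOfFin hscard) ((s.orderIsoOfFin hscard).symm ⟨p, hps⟩) : Fin n) = p
      rw [OrderIso.apply_symm_apply]⟩
    rw [hgx] at hj
    exact hp j hj

/-- Any strictly monotone self-map of `Fin k` is the identity. -/
private lemma strictMono_fin_id {k : ℕ} {f : Fin k → Fin k} (hf : StrictMono f) :
    f = id := by
  haveI : WellFoundedLT (Fin k) := inferInstance
  have h1 : ∀ i, i ≤ f i := fun i => hf.le_apply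
  have hg : StrictMono (Fin.rev ∘ f ∘ Fin.rev) := by
    intro a b hab
    simp only [Function.comp_apply, Fin.rev_lt_rev]
    exact hf (Fin.rev_lt_rev.mpr hab)
  have h2 : ∀ i, f i ≤ i := by
    intro i
    have := hg.le_apply (x := Fin.rev i)
    simp only [Function.comp_apply, Fin.rev_rev] at this
    rwa [Fin.rev_le_rev] at this
  funext i
  exact le_antisymm (h2 i) (h1 i)

/-- If `π` (on `Fin n`, bijective) contains an occurrence exactly once of the decreasing
pattern of length `k` and avoids 132, 213, then `n = k`. -/
private lemma n_eq_k {k : ℕ} (hk : 1 ≤ k) (hπ : Function.Injective π)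
    (h132 : Avoids p132 π) (h213 : Avoids p213 π)
    (hc : ContainsOnce (Fin.rev : Fin k → Fin k) π) : n = k := by
  obtain ⟨x, hx, huniq⟩ := hc
  have hkn : k ≤ n := by
    have := Fintype.card_le_of_injective x hx.1.injective
    simpa using this
  rcases eq_or_lt_of_le hkn with h | h
  · exact h.symm
  · exfalso
    -- there is a position not hit by x
    have : ∃ p : Fin n, ∀ j, x j ≠ p := by
      by_contra hcon
      push_neg at hcon
      have hsurj : Function.Surjective x := hcon
      have := Fintype.card_le_of_surjective x hsurj
      simp only [Fintype.card_fin] at this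
      omega
    obtain ⟨p, hp⟩ := this
    obtain ⟨g, hg, hgx⟩ := second_occ hk hπ h132 h213 x hx p hp
    exact hgx (huniq g hg)

/-- The reverse permutation on `Fin k` satisfies all the conditions. -/
private lemma rev_good {k : ℕ} :
    Function.Bijective (Fin.rev : Fin k → Fin k) ∧
      Avoids p132 (Fin.rev : Fin k → Fin k) ∧ Avoids p213 (Fin.rev : Fin k → Fin k) ∧
      ContainsOnce (Fin.rev : Fin k → Fin k) (Fin.rev : Fin k → Fin k) := by
  refine ⟨Fin.rev_involutive.bijective, ?_, ?_, ?_⟩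
  · rintro ⟨f, hf, hfo⟩
    have h01 : (0 : Fin 3) < 1 := by decide
    have hτ : p132 0 < p132 1 := by decide
    have := (hfo 0 1).mp hτ
    exact absurd this (Fin.rev_lt_rev.mpr (hf h01)).asymm
  · rintro ⟨f, hf, hfo⟩
    have h02 : (0 : Fin 3) < 2 := by decide
    have hτ : p213 0 < p213 2 := by decide
    have := (hfo 0 2).mp hτ
    exact absurd this (Fin.rev_lt_rev.mpr (hf h02)).asymm
  · refine ⟨id, ⟨strictMono_id, fun i j => Iff.rfl⟩, ?_⟩
    intro f hf
    exact strictMono_fin_id hf.1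

/-- Uniqueness: on `Fin k`, the only permutation with the properties is `Fin.rev`. -/
private lemma eq_rev {k : ℕ} {σ : Fin k → Fin k}
    (hc : ContainsOnce (Fin.rev : Fin k → Fin k) σ) : σ = Fin.rev := by
  obtain ⟨f, hf, _⟩ := hc
  have hfid : f = id := strictMono_fin_id hf.1
  rw [hfid] at hf
  have hanti : ∀ {i j : Fin k}, i < j → σ j < σ i := by
    intro i j hij
    exact (hf.2 j i).mp (Fin.rev_lt_rev.mpr hij)
  have hmono : StrictMono (σ ∘ Fin.rev) := by
    intro i j hij
    exact hanti (Fin.rev_lt_rev.mpr (by simpa using hij))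
  have := strictMono_fin_id hmono
  funext i
  have : (σ ∘ Fin.rev) (Fin.rev i) = id (Fin.rev i) := by rw [this]
  simpa using this

end aux

/-- for `k ≥ 1`, `|Sₙ(132,213; (k,k−1,…,1))|` is `1` if `n = k` and `0`
otherwise. -/
theorem stmt12 (k : ℕ) (hk : 1 ≤ k) (n : ℕ) :
    Nat.card {π : Fin n → Fin n // Function.Bijective π ∧
      Avoids p132 π ∧ Avoids p213 π ∧ ContainsOnce (Fin.rev : Fin k → Fin k) π} =
      if n = k then 1 else 0 := by
  rcases eq_or_ne n k with rfl | hne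
  · rw [if_pos rfl, Nat.card_eq_one_iff_unique]
    constructor
    · constructor
      intro ⟨σ, _, _, _, hc⟩ ⟨σ', _, _, _, hc'⟩
      have h1 := eq_rev hc
      have h2 := eq_rev hc'
      simp [h1, h2]
    · exact ⟨⟨Fin.rev, rev_good⟩⟩
  · rw [if_neg hne]
    have : IsEmpty {π : Fin n → Fin n // Function.Bijective π ∧
        Avoids p132 π ∧ Avoids p213 π ∧ ContainsOnce (Fin.rev : Fin k → Fin k) π} := by
      constructor
      rintro ⟨π, hb, h132, h213, hc⟩
      exact hne (n_eq_k hk hb.injective h132 h213 hc)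
    exact Nat.card_of_isEmpty
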